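/- Let G₁ be a connected m-uniform hypergraph on n₁ vertices whose incidence matrix over ℤ/mℤ has invariant divisors d₁,...,d_{r₁}, and let G₂ be a connected m-uniform hypergraph on n₂ vertices whose incidence matrix has invariant divisors d̄₁,...,d̄_{r₂}. Then the stabilizing index of the Cartesian product satisfies s(G₁ □ G₂) = m^{(n₁−r₁)(n₂−r₂)−1} · ∏_{i,j} gcd(dᵢ, d̄ⱼ) · ∏_i dᵢ^{n₂−r₂} · ∏_j d̄ⱼ^{n₁−r₁}. -/

import Mathlib

open Matrix

/-- An `m`-uniform hypergraph on the vertex type `V`. -/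
structure HG (m : ℕ) (V : Type) where
  edges : Finset (Finset V)
  uniform : ∀ e ∈ edges, e.card = m

namespace HG

variable {m : ℕ} {V : Type}

/-- Two vertices are adjacent if they are distinct and some edge contains both. -/
def adj (G : HG m V) (u v : V) : Prop :=
  u ≠ v ∧ ∃ e ∈ G.edges, u ∈ e ∧ v ∈ e

/-- A hypergraph is connected if every two vertices are joined by a walk. -/
def Connected (G : HG m V) : Prop :=
  ∀ u v : V, Relation.ReflTransGen G.adj u v

/-- The incidence matrix of `G` over `ZMod m`: rows are edges, columns are vertices,
entry `1` iff the vertex lies in the edge. -/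
def inc [DecidableEq V] (G : HG m V) : Matrix {e // e ∈ G.edges} V (ZMod m) :=
  Matrix.of fun e v => if v ∈ e.1 then 1 else 0

/-- The stabilizing index of `G` with respect to a base vertex `v₀`: the number of
solutions `x` of `In(G)·x = 0` over `ZMod m` with `x v₀ = 0`. -/
noncomputable def stabIndex [DecidableEq V] [Fintype V] (G : HG m V) (v₀ : V) : ℕ :=
  Nat.card {x : V → ZMod m // G.inc.mulVec x = 0 ∧ x v₀ = 0}

/-- The cyclic index of `G`: the largest divisor `ℓ` of `m` such that `G` has an
`(m,ℓ)`-coloring, i.e. a vertex labelling whose sum on each edge is `m/ℓ` mod `m`. -/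
noncomputable def cyclicIndex (G : HG m V) : ℕ :=
  sSup {ℓ : ℕ | ℓ ∣ m ∧ ∃ x : V → ZMod m, ∀ e ∈ G.edges, ∑ v ∈ e, x v = ((m / ℓ : ℕ) : ZMod m)}

end HG

/-- The Cartesian product of two `m`-uniform hypergraphs: an edge is an edge of one
factor in one coordinate, with the other coordinate held constant. -/
def cartProd {m : ℕ} {V₁ V₂ : Type} [DecidableEq V₁] [DecidableEq V₂] [Fintype V₁] [Fintype V₂]
    (G₁ : HG m V₁) (G₂ : HG m V₂) : HG m (V₁ × V₂) where
  edges :=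
    (Finset.univ : Finset V₁).biUnion
        (fun u => G₂.edges.image (Finset.image (fun v => (u, v)))) ∪
      (Finset.univ : Finset V₂).biUnion
        (fun v => G₁.edges.image (Finset.image (fun u => (u, v))))
  uniform := by
    intro e he
    simp only [Finset.mem_union, Finset.mem_biUnion, Finset.mem_image, Finset.mem_univ,
      true_and] at he
    rcases he with ⟨u, f, hf, rfl⟩ | ⟨v, f, hf, rfl⟩
    · rw [Finset.card_image_of_injective _ (fun a b hab => by simpa using hab)]
      exact G₂.uniform f hf
    · rw [Finset.card_image_of_injective _ (fun a b hab => by simpa using hab)]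
      exact G₁.uniform f hf

/-- `B` has (nonzero) invariant divisors `d 0, …, d (r-1)` in its Smith normal form over
`ZMod m`: there are invertible `P`, `Q` and labelings of rows and columns by initial
segments of `ℕ` such that `P * B * Q` is diagonal with entries `d 0, …, d (r-1), 0, …, 0`,
where `1 ≤ d i ≤ m - 1`, each `d i` divides `m`, and `d i ∣ d j` for `i ≤ j`. -/
def HasInvDiv {m : ℕ} {α β : Type} [Fintype α] [DecidableEq α] [Fintype β] [DecidableEq β]
    (B : Matrix α β (ZMod m)) (r : ℕ) (d : Fin r → ℕ) : Prop :=
  r ≤ Fintype.card α ∧ r ≤ Fintype.card β ∧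
  (∀ i : Fin r, 0 < d i ∧ d i < m ∧ d i ∣ m) ∧
  (∀ i j : Fin r, i ≤ j → d i ∣ d j) ∧
  ∃ (P : Matrix α α (ZMod m)) (Q : Matrix β β (ZMod m))
      (eα : α ≃ Fin (Fintype.card α)) (eβ : β ≃ Fin (Fintype.card β)),
    IsUnit P.det ∧ IsUnit Q.det ∧
      ∀ (a : α) (b : β), (P * B * Q) a b =
        if h : (eα a : ℕ) = (eβ b : ℕ) ∧ (eα a : ℕ) < r
        then ((d ⟨eα a, h.2⟩ : ℕ) : ZMod m) else 0


/-!
Constant labellings lie in the kernel of the incidence matrix of an `m`-uniform hypergraph, so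
`s(G) * m` is the size of that kernel. A labelling of `G₁ □ G₂` is a matrix `X`, and it lies in
the kernel iff `In(G₁) * X = 0` and `X * In(G₂)ᵀ = 0`. Passing to Smith forms
`P₁ In(G₁) Q₁` and `P₂ In(G₂) Q₂` through `X = Q₁ Y Q₂ᵀ` decouples the entries: `Y k l` is only
subject to `dₖ Y k l = 0` and `d̄ₗ Y k l = 0`, which has `gcd(dₖ, d̄ₗ)` solutions when zero
diagonal entries are counted as `m`. The constant labellings also force a zero diagonal entry
in each factor (`rᵢ < nᵢ`), so the factor `m` of the first step divides out of
`m ^ ((n₁ - r₁) * (n₂ - r₂))`.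
-/

namespace ZMod

theorem card_mul_eq_zero (m : ℕ) [NeZero m] (a : ℕ) :
    Nat.card {z : ZMod m // (a : ZMod m) * z = 0} = m.gcd a := by
  have hker := IsAddCyclic.card_nsmulAddMonoidHom_ker (ZMod m) a
  rw [Nat.card_zmod] at hker
  rw [← hker]
  exact Nat.card_congr <| Equiv.subtypeEquivRight fun z => by
    rw [AddMonoidHom.mem_ker, nsmulAddMonoidHom_apply, nsmul_eq_mul]

theorem mul_eq_zero_and_mul_eq_zero_iff {m : ℕ} (a b : ℕ) (z : ZMod m) :
    (a : ZMod m) * z = 0 ∧ (b : ZMod m) * z = 0 ↔ (a.gcd b : ZMod m) * z = 0 := by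
  constructor
  · rintro ⟨ha, hb⟩
    have hbezout : ((a.gcd b : ℤ) : ZMod m) =
        a * (a.gcdA b : ZMod m) + b * (a.gcdB b : ZMod m) := by
      rw [Nat.gcd_eq_gcd_ab]; push_cast; ring
    rw [← Int.cast_natCast, hbezout]
    linear_combination (a.gcdA b : ZMod m) * ha + (a.gcdB b : ZMod m) * hb
  · intro h
    obtain ⟨k, hk⟩ := Nat.gcd_dvd_left a b
    obtain ⟨l, hl⟩ := Nat.gcd_dvd_right a b
    refine ⟨?_, ?_⟩
    · rw [hk]; push_cast; linear_combination (k : ZMod m) * h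
    · rw [hl]; push_cast; linear_combination (l : ZMod m) * h

theorem card_mul_eq_zero_and_mul_eq_zero {m : ℕ} [NeZero m] {a : ℕ} (ha : a ∣ m) (b : ℕ) :
    Nat.card {z : ZMod m // (a : ZMod m) * z = 0 ∧ (b : ZMod m) * z = 0} = a.gcd b := by
  rw [Nat.card_congr (Equiv.subtypeEquivRight (mul_eq_zero_and_mul_eq_zero_iff a b)),
    card_mul_eq_zero, Nat.gcd_eq_right ((Nat.gcd_dvd_left a b).trans ha)]

end ZMod

namespace Matrix

variable {R : Type*} [CommRing R] {ι κ μ ν : Type*}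

theorem mul_eq_zero_iff_forall_mulVec [Fintype κ] (A : Matrix ν κ R) (X : Matrix κ μ R) :
    A * X = 0 ↔ ∀ c, A *ᵥ (fun b => X b c) = 0 :=
  ⟨fun h c => funext fun i => congrFun (congrFun h i) c,
    fun h => funext fun i => funext fun c => congrFun (h c) i⟩

theorem mul_transpose_eq_zero_iff [Fintype κ] (X : Matrix μ κ R) (B : Matrix ν κ R) :
    X * Bᵀ = 0 ↔ B * Xᵀ = 0 := by
  rw [← transpose_eq_zero, transpose_mul, transpose_transpose]

theorem mul_eq_zero_iff_of_isUnit_det_left [Fintype ι] [DecidableEq ι] {P : Matrix ι ι R}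
    (hP : IsUnit P.det) (M : Matrix ι μ R) : P * M = 0 ↔ M = 0 := by
  let := P.invertibleOfIsUnitDet hP
  simpa using mul_right_inj_of_invertible P (x := M) (y := 0)

theorem mul_eq_zero_iff_of_isUnit_det_right [Fintype ι] [DecidableEq ι] {P : Matrix ι ι R}
    (hP : IsUnit P.det) (M : Matrix μ ι R) : M * P = 0 ↔ M = 0 := by
  let := P.invertibleOfIsUnitDet hP
  simpa using mul_left_inj_of_invertible P (x := M) (y := 0)

theorem mul_mul_mul_eq_zero_iff [Fintype ν] [DecidableEq ν] [Fintype κ] [Fintype μ]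
    [DecidableEq μ] {P : Matrix ν ν R} {S : Matrix μ μ R} (hP : IsUnit P.det)
    (hS : IsUnit S.det) (A : Matrix ν κ R) (Q : Matrix κ κ R) (Y : Matrix κ μ R) :
    A * (Q * Y * S) = 0 ↔ P * A * Q * Y = 0 := by
  rw [← mul_eq_zero_iff_of_isUnit_det_right hS (P * A * Q * Y),
    ← mul_eq_zero_iff_of_isUnit_det_left hP]
  simp only [Matrix.mul_assoc]

def twoSidedKer {ι' κ' : Type*} [Fintype κ] [Fintype κ'] (A : Matrix ι κ R)
    (B : Matrix ι' κ' R) : Set (Matrix κ κ' R) :=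
  {X | A * X = 0 ∧ X * Bᵀ = 0}

theorem card_twoSidedKer_congr {ι' κ' : Type*} [Fintype ι] [DecidableEq ι] [Fintype κ]
    [DecidableEq κ] [Fintype ι'] [DecidableEq ι'] [Fintype κ'] [DecidableEq κ']
    (A : Matrix ι κ R) (B : Matrix ι' κ' R) {P : Matrix ι ι R} {Q : Matrix κ κ R}
    {P' : Matrix ι' ι' R} {Q' : Matrix κ' κ' R} (hP : IsUnit P.det) (hQ : IsUnit Q.det)
    (hP' : IsUnit P'.det) (hQ' : IsUnit Q'.det) :
    Nat.card (twoSidedKer A B) = Nat.card (twoSidedKer (P * A * Q) (P' * B * Q')) := by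
  have hQT : IsUnit Qᵀ.det := by rwa [det_transpose]
  have hQ'T : IsUnit Q'ᵀ.det := by rwa [det_transpose]
  let e : Matrix κ κ' R ≃ Matrix κ κ' R :=
    { toFun := fun Y => Q * Y * Q'ᵀ
      invFun := fun X => Q⁻¹ * X * Q'ᵀ⁻¹
      left_inv := fun Y => by
        simp [Matrix.mul_assoc, nonsing_inv_mul_cancel_left _ _ hQ, mul_nonsing_inv _ hQ'T]
      right_inv := fun X => by
        simp [Matrix.mul_assoc, mul_nonsing_inv_cancel_left _ _ hQ, nonsing_inv_mul _ hQ'T] }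
  refine (Nat.card_congr (e.subtypeEquiv fun Y => ?_)).symm
  change P * A * Q * Y = 0 ∧ Y * (P' * B * Q')ᵀ = 0 ↔
    A * (Q * Y * Q'ᵀ) = 0 ∧ Q * Y * Q'ᵀ * Bᵀ = 0
  rw [mul_mul_mul_eq_zero_iff hP hQ'T, mul_transpose_eq_zero_iff Y,
    mul_transpose_eq_zero_iff (Q * Y * Q'ᵀ), ← mul_mul_mul_eq_zero_iff hP' hQT]
  simp only [transpose_mul, transpose_transpose, Matrix.mul_assoc]

end Matrix

/-- The `k`-th diagonal entry of a Smith normal form with invariant divisors `d`, a zero entry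
being recorded as `m`: either way the entry's annihilator in `ZMod m` has that many elements. -/
def paddedInvDiv (m r : ℕ) (d : Fin r → ℕ) (k : ℕ) : ℕ :=
  if h : k < r then d ⟨k, h⟩ else m

theorem paddedInvDiv_dvd {m r : ℕ} {d : Fin r → ℕ} (hd : ∀ i, d i ∣ m) (k : ℕ) :
    paddedInvDiv m r d k ∣ m := by
  unfold paddedInvDiv
  split_ifs
  exacts [hd _, dvd_rfl]

theorem prod_paddedInvDiv {M : Type*} [CommMonoid M] {m r n : ℕ} (d : Fin r → ℕ) (hrn : r ≤ n)
    (g : ℕ → M) :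
    ∏ k : Fin n, g (paddedInvDiv m r d k) = (∏ i, g (d i)) * g m ^ (n - r) := by
  obtain ⟨s, rfl⟩ := Nat.exists_eq_add_of_le hrn
  rw [Fin.prod_univ_eq_prod_range (fun k => g (paddedInvDiv m r d k)), Finset.prod_range_add,
    ← Fin.prod_univ_eq_prod_range (fun k => g (paddedInvDiv m r d k)), Nat.add_sub_cancel_left]
  congr 1
  · simp [paddedInvDiv]
  · rw [Finset.prod_congr rfl fun k _ => by rw [paddedInvDiv, dif_neg (by omega)],
      Finset.prod_const, Finset.card_range]

theorem prod_prod_gcd_paddedInvDiv {m r₁ r₂ n₁ n₂ : ℕ} {d : Fin r₁ → ℕ} {e : Fin r₂ → ℕ}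
    (hd : ∀ i, d i ∣ m) (he : ∀ j, e j ∣ m) (h₁ : r₁ ≤ n₁) (h₂ : r₂ ≤ n₂) :
    ∏ k : Fin n₁, ∏ l : Fin n₂, (paddedInvDiv m r₁ d k).gcd (paddedInvDiv m r₂ e l) =
      m ^ ((n₁ - r₁) * (n₂ - r₂)) * (∏ i, ∏ j, (d i).gcd (e j)) *
        (∏ i, d i ^ (n₂ - r₂)) * ∏ j, e j ^ (n₁ - r₁) := by
  have hrow (c : ℕ) (hc : c ∣ m) :
      ∏ l : Fin n₂, c.gcd (paddedInvDiv m r₂ e l) = (∏ j, c.gcd (e j)) * c ^ (n₂ - r₂) := by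
    rw [prod_paddedInvDiv e h₂ c.gcd, Nat.gcd_eq_left hc]
  rw [Finset.prod_congr rfl fun (k : Fin n₁) _ => hrow _ (paddedInvDiv_dvd hd k),
    prod_paddedInvDiv d h₁ fun c => (∏ j, c.gcd (e j)) * c ^ (n₂ - r₂),
    Finset.prod_congr rfl fun j _ => Nat.gcd_eq_right (he j), Finset.prod_mul_distrib,
    mul_pow, ← pow_mul]
  simp only [Finset.prod_pow]
  ring

def smithMatrix {α β : Type*} {p q : ℕ} (m r : ℕ) (d : Fin r → ℕ) (eα : α ≃ Fin p)
    (eβ : β ≃ Fin q) : Matrix α β (ZMod m) :=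
  of fun a b => if (eα a : ℕ) = eβ b then (paddedInvDiv m r d (eβ b) : ZMod m) else 0

section smithMatrix

variable {m r p q : ℕ} {d : Fin r → ℕ} {α β : Type*} [Fintype β] (eα : α ≃ Fin p)
  (eβ : β ≃ Fin q)

theorem smithMatrix_mulVec_eq_zero_iff (hrp : r ≤ p) (y : β → ZMod m) :
    smithMatrix m r d eα eβ *ᵥ y = 0 ↔ ∀ b, (paddedInvDiv m r d (eβ b) : ZMod m) * y b = 0 := by
  constructor
  · intro h b
    by_cases hb : (eβ b : ℕ) < r
    · have hrow := congrFun h (eα.symm ⟨eβ b, by omega⟩)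
      rw [mulVec, dotProduct, Finset.sum_eq_single b] at hrow
      · simpa [smithMatrix] using hrow
      · intro b' _ hb'
        simp [smithMatrix, Fin.val_eq_val, eβ.injective.eq_iff, Ne.symm hb']
      · simp
    · simp [paddedInvDiv, hb]
  · intro h
    funext a
    refine Finset.sum_eq_zero fun b _ => ?_
    simp only [smithMatrix, of_apply, ite_mul, zero_mul, h b, ite_self]

theorem smithMatrix_mul_eq_zero_iff {γ : Type*} (hrp : r ≤ p) (Y : Matrix β γ (ZMod m)) :
    smithMatrix m r d eα eβ * Y = 0 ↔
      ∀ b c, (paddedInvDiv m r d (eβ b) : ZMod m) * Y b c = 0 := by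
  simp only [mul_eq_zero_iff_forall_mulVec, smithMatrix_mulVec_eq_zero_iff eα eβ hrp]
  exact forall_comm

end smithMatrix

theorem card_twoSidedKer_smithMatrix {m r r' p q p' q' : ℕ} [NeZero m] {d : Fin r → ℕ}
    {d' : Fin r' → ℕ} {α β α' β' : Type*} [Fintype β] [Fintype β'] [DecidableEq β']
    (eα : α ≃ Fin p) (eβ : β ≃ Fin q) (eα' : α' ≃ Fin p') (eβ' : β' ≃ Fin q')
    (hd : ∀ i, d i ∣ m) (hrp : r ≤ p) (hrp' : r' ≤ p') :
    Nat.card (twoSidedKer (smithMatrix m r d eα eβ) (smithMatrix m r' d' eα' eβ')) =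
      ∏ u, ∏ v, (paddedInvDiv m r d (eβ u)).gcd (paddedInvDiv m r' d' (eβ' v)) := by
  let cond (u : β) (v : β') (z : ZMod m) : Prop :=
    (paddedInvDiv m r d (eβ u) : ZMod m) * z = 0 ∧ (paddedInvDiv m r' d' (eβ' v) : ZMod m) * z = 0
  have hcond (Y : Matrix β β' (ZMod m)) :
      Y ∈ twoSidedKer (smithMatrix m r d eα eβ) (smithMatrix m r' d' eα' eβ') ↔
        ∀ u v, cond u v (Y u v) := by
    rw [twoSidedKer, Set.mem_ofPred_eq, mul_transpose_eq_zero_iff,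
      smithMatrix_mul_eq_zero_iff eα eβ hrp,
      smithMatrix_mul_eq_zero_iff eα' eβ' hrp', forall_comm (α := β')]
    simp only [transpose_apply, ← forall_and, cond]
  rw [Nat.card_congr ((Equiv.subtypeEquivRight hcond).trans <| Equiv.subtypePiEquivPi.trans <|
      Equiv.piCongrRight fun u => Equiv.subtypePiEquivPi (p := cond u)), Nat.card_pi]
  refine Finset.prod_congr rfl fun u _ => ?_
  rw [Nat.card_pi]
  exact Finset.prod_congr rfl fun v _ =>
    ZMod.card_mul_eq_zero_and_mul_eq_zero (paddedInvDiv_dvd hd _) _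

namespace HasInvDiv

variable {m r : ℕ} {d : Fin r → ℕ} {α β : Type} [Fintype α] [DecidableEq α] [Fintype β]
  [DecidableEq β] {B : Matrix α β (ZMod m)}

theorem dvd (h : HasInvDiv B r d) (i : Fin r) : d i ∣ m :=
  (h.2.2.1 i).2.2

theorem exists_mul_mul_eq_smithMatrix (h : HasInvDiv B r d) :
    ∃ (P : Matrix α α (ZMod m)) (Q : Matrix β β (ZMod m)) (eα : α ≃ Fin (Fintype.card α))
      (eβ : β ≃ Fin (Fintype.card β)),
      IsUnit P.det ∧ IsUnit Q.det ∧ P * B * Q = smithMatrix m r d eα eβ := by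
  obtain ⟨-, -, -, -, P, Q, eα, eβ, hP, hQ, hPQ⟩ := h
  refine ⟨P, Q, eα, eβ, hP, hQ, ext fun a b => ?_⟩
  rw [hPQ]
  simp only [smithMatrix, of_apply, paddedInvDiv]
  split_ifs <;> first | omega | simp_all

/-- When the Smith form has no zero diagonal entry, the last invariant divisor annihilates
the kernel. -/
theorem smul_eq_zero_of_mulVec_eq_zero (h : HasInvDiv B r d) (i : Fin r)
    (hi : (i : ℕ) + 1 = Fintype.card β) {x : β → ZMod m} (hx : B *ᵥ x = 0) :
    (d i : ZMod m) • x = 0 := by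
  obtain ⟨P, Q, eα, eβ, -, hQ, hPQ⟩ := h.exists_mul_mul_eq_smithMatrix
  obtain ⟨hrα, -, -, hdvd, -⟩ := h
  have hQy : Q *ᵥ (Q⁻¹ *ᵥ x) = x := by rw [mulVec_mulVec, mul_nonsing_inv _ hQ, one_mulVec]
  have hy : smithMatrix m r d eα eβ *ᵥ (Q⁻¹ *ᵥ x) = 0 := by
    rw [← hPQ, ← mulVec_mulVec, hQy, ← mulVec_mulVec, hx, mulVec_zero]
  rw [smithMatrix_mulVec_eq_zero_iff eα eβ hrα] at hy
  suffices (d i : ZMod m) • (Q⁻¹ *ᵥ x) = 0 by rw [← hQy, ← mulVec_smul, this, mulVec_zero]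
  funext b
  have hb : (eβ b : ℕ) < r := by omega
  obtain ⟨t, ht⟩ := hdvd ⟨eβ b, hb⟩ i (Fin.mk_le_mk.mpr (by omega))
  have hyb := hy b
  rw [paddedInvDiv, dif_pos hb] at hyb
  simp only [Pi.smul_apply, smul_eq_mul, Pi.zero_apply, ht, Nat.cast_mul]
  linear_combination (t : ZMod m) * hyb

theorem lt_card (h : HasInvDiv B r d) {x : β → ZMod m} (hx : B *ᵥ x = 0) {b₀ : β}
    (hb₀ : x b₀ = 1) : r < Fintype.card β := by
  by_contra hle
  have hcard : 0 < Fintype.card β := Fintype.card_pos_iff.mpr ⟨b₀⟩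
  have hr : r = Fintype.card β := by have := h.2.1; omega
  let i : Fin r := ⟨r - 1, by omega⟩
  have hdi := congrFun (h.smul_eq_zero_of_mulVec_eq_zero i (by simp only [i]; omega) hx) b₀
  obtain ⟨-, -, hdm, -⟩ := h
  rw [Pi.smul_apply, hb₀, smul_eq_mul, mul_one, Pi.zero_apply, ZMod.natCast_eq_zero_iff] at hdi
  have := Nat.le_of_dvd (hdm i).1 hdi
  have := (hdm i).2.1
  omega

end HasInvDiv

theorem HasInvDiv.card_twoSidedKer {m r r' : ℕ} [NeZero m] {d : Fin r → ℕ} {d' : Fin r' → ℕ}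
    {α β α' β' : Type} [Fintype α] [DecidableEq α] [Fintype β] [DecidableEq β] [Fintype α']
    [DecidableEq α'] [Fintype β'] [DecidableEq β'] {A : Matrix α β (ZMod m)}
    {B : Matrix α' β' (ZMod m)} (hA : HasInvDiv A r d) (hB : HasInvDiv B r' d') :
    Nat.card (twoSidedKer A B) =
      ∏ k : Fin (Fintype.card β), ∏ l : Fin (Fintype.card β'),
        (paddedInvDiv m r d k).gcd (paddedInvDiv m r' d' l) := by
  obtain ⟨P, Q, eα, eβ, hP, hQ, hPQ⟩ := hA.exists_mul_mul_eq_smithMatrix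
  obtain ⟨P', Q', eα', eβ', hP', hQ', hPQ'⟩ := hB.exists_mul_mul_eq_smithMatrix
  rw [card_twoSidedKer_congr A B hP hQ hP' hQ', hPQ, hPQ',
    card_twoSidedKer_smithMatrix eα eβ eα' eβ' hA.dvd hA.1 hB.1]
  exact Fintype.prod_equiv eβ _ _ fun u => Fintype.prod_equiv eβ' _ _ fun v => rfl

namespace HG

variable {m : ℕ} {V : Type} [DecidableEq V] [Fintype V]

theorem mulVec_inc_eq_zero_iff (G : HG m V) (x : V → ZMod m) :
    G.inc *ᵥ x = 0 ↔ ∀ f ∈ G.edges, ∑ v ∈ f, x v = 0 := by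
  have hrow (f : {f // f ∈ G.edges}) : (G.inc *ᵥ x) f = ∑ v ∈ f.1, x v := by
    simp [inc, mulVec, dotProduct, Finset.sum_ite_mem]
  simp only [funext_iff, hrow, Pi.zero_apply, Subtype.forall]

theorem mulVec_inc_const (G : HG m V) (c : ZMod m) : G.inc *ᵥ (fun _ => c) = 0 := by
  rw [mulVec_inc_eq_zero_iff]
  intro f hf
  rw [Finset.sum_const, G.uniform f hf, nsmul_eq_mul, ZMod.natCast_self, zero_mul]

theorem card_ker_inc (G : HG m V) (v₀ : V) :
    Nat.card {x : V → ZMod m // G.inc *ᵥ x = 0} = G.stabIndex v₀ * m := by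
  let e : {x : V → ZMod m // G.inc *ᵥ x = 0} ≃
      {x : V → ZMod m // G.inc *ᵥ x = 0 ∧ x v₀ = 0} × ZMod m :=
    { toFun := fun x => (⟨x.1 - fun _ => x.1 v₀,
        by rw [mulVec_sub, x.2, G.mulVec_inc_const, sub_zero], by simp⟩, x.1 v₀)
      invFun := fun p => ⟨p.1.1 + fun _ => p.2,
        by rw [mulVec_add, p.1.2.1, G.mulVec_inc_const, add_zero]⟩
      left_inv := fun x => by simp
      right_inv := fun p => by simp [p.1.2.2] }
  rw [Nat.card_congr e, Nat.card_prod, Nat.card_zmod, stabIndex]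

end HG

section cartProd

variable {m : ℕ} {V₁ V₂ : Type} [DecidableEq V₁] [DecidableEq V₂] [Fintype V₁] [Fintype V₂]

theorem mem_cartProd_edges (G₁ : HG m V₁) (G₂ : HG m V₂) (e : Finset (V₁ × V₂)) :
    e ∈ (cartProd G₁ G₂).edges ↔
      (∃ u, ∃ f ∈ G₂.edges, f.image (u, ·) = e) ∨ ∃ v, ∃ f ∈ G₁.edges, f.image (·, v) = e := by
  simp [cartProd]

theorem mulVec_inc_cartProd_eq_zero_iff (G₁ : HG m V₁) (G₂ : HG m V₂) (x : V₁ × V₂ → ZMod m) :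
    (cartProd G₁ G₂).inc *ᵥ x = 0 ↔
      G₁.inc * of (Function.curry x) = 0 ∧ of (Function.curry x) * G₂.incᵀ = 0 := by
  rw [mul_eq_zero_iff_forall_mulVec, mul_transpose_eq_zero_iff, mul_eq_zero_iff_forall_mulVec]
  simp only [HG.mulVec_inc_eq_zero_iff, mem_cartProd_edges]
  constructor
  · intro h
    refine ⟨fun v f hf => ?_, fun u f hf => ?_⟩
    · simpa [Finset.sum_image] using h _ (Or.inr ⟨v, f, hf, rfl⟩)
    · simpa [Finset.sum_image] using h _ (Or.inl ⟨u, f, hf, rfl⟩)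
  · rintro ⟨h₁, h₂⟩ e (⟨u, f, hf, rfl⟩ | ⟨v, f, hf, rfl⟩)
    · simpa [Finset.sum_image] using h₂ u f hf
    · simpa [Finset.sum_image] using h₁ v f hf

theorem card_ker_inc_cartProd (G₁ : HG m V₁) (G₂ : HG m V₂) :
    Nat.card {x // (cartProd G₁ G₂).inc *ᵥ x = 0} =
      Nat.card (twoSidedKer G₁.inc G₂.inc) :=
  Nat.card_congr <| ((Equiv.curry _ _ _).trans of).subtypeEquiv
    (mulVec_inc_cartProd_eq_zero_iff G₁ G₂)

end cartProd

theorem stabIndex_cartProd_general (m n₁ n₂ : ℕ) (hm : 2 ≤ m)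
    (G₁ : HG m (Fin n₁)) (G₂ : HG m (Fin n₂))
    (r₁ r₂ : ℕ) (d : Fin r₁ → ℕ) (e : Fin r₂ → ℕ)
    (hd : HasInvDiv G₁.inc r₁ d) (he : HasInvDiv G₂.inc r₂ e)
    (w : Fin n₁ × Fin n₂) :
    (cartProd G₁ G₂).stabIndex w =
      m ^ ((n₁ - r₁) * (n₂ - r₂) - 1) *
        (∏ i : Fin r₁, ∏ j : Fin r₂, Nat.gcd (d i) (e j)) *
        (∏ i : Fin r₁, d i ^ (n₂ - r₂)) * (∏ j : Fin r₂, e j ^ (n₁ - r₁)) := by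
  have : NeZero m := ⟨by omega⟩
  have hr₁ : r₁ < n₁ := by simpa using hd.lt_card (G₁.mulVec_inc_const 1) (b₀ := w.1) rfl
  have hr₂ : r₂ < n₂ := by simpa using he.lt_card (G₂.mulVec_inc_const 1) (b₀ := w.2) rfl
  obtain ⟨N, hN⟩ : ∃ N, (n₁ - r₁) * (n₂ - r₂) = N + 1 :=
    Nat.exists_eq_add_one.mpr (Nat.mul_pos (by omega) (by omega))
  apply Nat.eq_of_mul_eq_mul_right (by omega : 0 < m)
  rw [← HG.card_ker_inc _ w, card_ker_inc_cartProd, hd.card_twoSidedKer he, Fintype.card_fin,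
    Fintype.card_fin, prod_prod_gcd_paddedInvDiv hd.dvd he.dvd hr₁.le hr₂.le, hN,
    Nat.add_sub_cancel]
  ring

/-- **Stabilizing index of a Cartesian product.** If the incidence matrices of connected
`m`-uniform hypergraphs `G₁` (on `n₁` vertices) and `G₂` (on `n₂` vertices) have invariant
divisors `d₁,…,d_{r₁}` and `d̄₁,…,d̄_{r₂}` over `ZMod m`, then
`s(G₁ □ G₂) = m^{(n₁-r₁)(n₂-r₂)-1} ∏_{i,j} gcd(dᵢ,d̄ⱼ) ∏_i dᵢ^{n₂-r₂} ∏_j d̄ⱼ^{n₁-r₁}`. -/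
theorem stabIndex_cartProd (m n₁ n₂ : ℕ) (hm : 2 ≤ m) (hn₁ : 2 ≤ n₁) (hn₂ : 2 ≤ n₂)
    (G₁ : HG m (Fin n₁)) (G₂ : HG m (Fin n₂))
    (h₁ : G₁.Connected) (h₂ : G₂.Connected)
    (r₁ r₂ : ℕ) (d : Fin r₁ → ℕ) (e : Fin r₂ → ℕ)
    (hd : HasInvDiv G₁.inc r₁ d) (he : HasInvDiv G₂.inc r₂ e)
    (w : Fin n₁ × Fin n₂) :
    (cartProd G₁ G₂).stabIndex w =
      m ^ ((n₁ - r₁) * (n₂ - r₂) - 1) *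
        (∏ i : Fin r₁, ∏ j : Fin r₂, Nat.gcd (d i) (e j)) *
        (∏ i : Fin r₁, d i ^ (n₂ - r₂)) * (∏ j : Fin r₂, e j ^ (n₁ - r₁)) :=
  stabIndex_cartProd_general m n₁ n₂ hm G₁ G₂ r₁ r₂ d e hd he w
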